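/- arXiv:1908.08422 — 2 statements merged into one kernel-verified Lean document; each statement's English description precedes it below -/
import Mathlib

section
/- Let γ(x) = σ²H(2H−1)|x|^{2H−2} for a Hurst parameter H ∈ (1/2, 1) and σ > 0. Then there exists a constant c > 0 (depending only on H and σ) such that for every compactly supported càdlàg function f : ℝ → ℝ and every t > 0, ∫∫_{ℝ²} |f(a)| γ(a−b) |f(b)| da db ≤ c t^H ( t^{−1/2} ‖f‖_2² + t^{−1} ‖f‖_1² ). -/
open MeasureTheory Filter
open scoped ENNReal

/-- A function is càdlàg if it is right-continuous and has left limits everywhere. -/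
def Cadlag (f : ℝ → ℝ) : Prop :=
  (∀ x : ℝ, ContinuousWithinAt f (Set.Ici x) x) ∧
  (∀ x : ℝ, ∃ l : ℝ, Tendsto f (nhdsWithin x (Set.Iio x)) (nhds l))

/-- A right-continuous function is measurable. -/
theorem meas_of_rc {f : ℝ → ℝ} (hf : ∀ x : ℝ, ContinuousWithinAt f (Set.Ici x) x) :
    Measurable f := by
  have hmeas : ∀ n : ℕ, Measurable (fun x : ℝ => f ((⌈x * 2 ^ n⌉ : ℤ) / 2 ^ n)) := by
    intro n
    exact (measurable_from_top (f := fun k : ℤ => f ((k : ℝ) / 2 ^ n))).comp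
      (Int.measurable_ceil.comp (measurable_id.mul_const _))
  apply measurable_of_tendsto_metrizable hmeas
  rw [tendsto_pi_nhds]
  intro x
  have h2 : ∀ n : ℕ, (0:ℝ) < 2 ^ n := fun n => by positivity
  have hge : ∀ n : ℕ, x ≤ ((⌈x * 2 ^ n⌉ : ℤ) : ℝ) / 2 ^ n := fun n => by
    rw [le_div_iff₀ (h2 n)]; exact Int.le_ceil _
  have hle : ∀ n : ℕ, ((⌈x * 2 ^ n⌉ : ℤ) : ℝ) / 2 ^ n ≤ x + (2 ^ n)⁻¹ := fun n => by
    rw [div_le_iff₀ (h2 n)]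
    calc ((⌈x * 2 ^ n⌉ : ℤ) : ℝ) ≤ x * 2 ^ n + 1 := (Int.ceil_lt_add_one (x * 2 ^ n)).le
      _ = (x + (2 ^ n)⁻¹) * 2 ^ n := by field_simp
  have htend : Tendsto (fun n : ℕ => ((⌈x * 2 ^ n⌉ : ℤ) : ℝ) / 2 ^ n) atTop (nhds x) := by
    have hub : Tendsto (fun n : ℕ => x + ((2:ℝ) ^ n)⁻¹) atTop (nhds x) := by
      have : Tendsto (fun n : ℕ => ((2:ℝ) ^ n)⁻¹) atTop (nhds 0) := by
        simpa using tendsto_pow_atTop_nhds_zero_of_lt_one (by norm_num : (0:ℝ) ≤ 2⁻¹)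
          (by norm_num : (2:ℝ)⁻¹ < 1) |>.congr (fun n => by rw [inv_pow])
      simpa using tendsto_const_nhds.add this
    exact tendsto_of_tendsto_of_tendsto_of_le_of_le tendsto_const_nhds hub hge hle
  have : Tendsto (fun n : ℕ => ((⌈x * 2 ^ n⌉ : ℤ) : ℝ) / 2 ^ n) atTop
      (nhdsWithin x (Set.Ici x)) :=
    tendsto_nhdsWithin_of_tendsto_nhds_of_eventually_within _ htend
      (Eventually.of_forall fun n => hge n)
  exact (hf x).tendsto.comp this

/-- A càdlàg function with compact support is bounded. -/
theorem bdd_of_cadlag {f : ℝ → ℝ} (hf : Cadlag f) (hc : HasCompactSupport f) :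
    ∃ M : ℝ, 0 ≤ M ∧ ∀ x, |f x| ≤ M := by
  have loc : ∀ x : ℝ, ∃ U : Set ℝ, U ∈ nhds x ∧ ∃ m : ℝ, ∀ y ∈ U, |f y| ≤ m := by
    intro x
    obtain ⟨l, hl⟩ := hf.2 x
    have hr : ∀ᶠ y in nhdsWithin x (Set.Ici x), |f y| ≤ |f x| + 1 := by
      filter_upwards [(hf.1 x).tendsto (Metric.ball_mem_nhds (f x) one_pos)] with y hy
      have : |f y - f x| < 1 := by simpa [Real.dist_eq] using hy
      calc |f y| ≤ |f y - f x| + |f x| := by simpa using abs_add_le (f y - f x) (f x)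
        _ ≤ |f x| + 1 := by linarith
    have hlft : ∀ᶠ y in nhdsWithin x (Set.Iio x), |f y| ≤ |l| + 1 := by
      filter_upwards [hl (Metric.ball_mem_nhds l one_pos)] with y hy
      have : |f y - l| < 1 := by simpa [Real.dist_eq] using hy
      calc |f y| ≤ |f y - l| + |l| := by simpa using abs_add_le (f y - l) l
        _ ≤ |l| + 1 := by linarith
    have hcomb : ∀ᶠ y in nhds x, |f y| ≤ max (|f x| + 1) (|l| + 1) := by
      rw [← nhdsLT_sup_nhdsGE x, eventually_sup]
      constructor
      · filter_upwards [hlft] with y hy; exact hy.trans (le_max_right _ _)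
      · filter_upwards [hr] with y hy; exact hy.trans (le_max_left _ _)
    exact ⟨{y | |f y| ≤ max (|f x| + 1) (|l| + 1)}, hcomb, _, fun y hy => hy⟩
  choose U hU m hm using loc
  obtain ⟨I, _, hI⟩ := hc.elim_nhds_subcover U (fun x _ => hU x)
  classical
  rcases I.eq_empty_or_nonempty with hIe | hIe
  · refine ⟨0, le_refl _, fun x => ?_⟩
    have hx : x ∉ tsupport f := by
      intro hx
      have := hI hx
      simp [hIe] at this
    simp [image_eq_zero_of_notMem_tsupport hx]
  · refine ⟨max 0 (I.sup' hIe m), le_max_left _ _, fun x => ?_⟩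
    by_cases hx : x ∈ tsupport f
    · obtain ⟨i, hiI, hxi⟩ := Set.mem_iUnion₂.1 (hI hx)
      exact (hm i x hxi).trans ((Finset.le_sup' m hiI).trans (le_max_right _ _))
    · simp [image_eq_zero_of_notMem_tsupport hx]

theorem kernel_integrable {s p : ℝ} (hs : 0 < s) (hp : -1 < p) :
    Integrable (fun x : ℝ => if |x| ≤ s then |x| ^ p else 0) := by
  have hk : (fun x : ℝ => if |x| ≤ s then |x| ^ p else 0)
      = Set.indicator (Set.Icc (-s) s) (fun x => |x| ^ p) := by
    funext x
    by_cases h : |x| ≤ s <;> simp [Set.indicator_apply, Set.mem_Icc, ← abs_le, h]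
  rw [hk, integrable_indicator_iff measurableSet_Icc]
  have h1 : IntegrableOn (fun x : ℝ => |x| ^ p) (Set.Icc 0 s) := by
    have h0 : IntegrableOn (fun x : ℝ => x ^ p) (Set.Ioc 0 s) := by
      have := intervalIntegral.intervalIntegrable_rpow' (a := 0) (b := s) hp
      rwa [intervalIntegrable_iff_integrableOn_Ioc_of_le hs.le] at this
    rw [integrableOn_Icc_iff_integrableOn_Ioc]
    exact h0.congr_fun (fun x hx => by rw [abs_of_pos hx.1]) measurableSet_Ioc
  have h2 : IntegrableOn (fun x : ℝ => |x| ^ p) (Set.Icc (-s) 0) := by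
    have hneg : MeasurableEmbedding (fun x : ℝ => -x) :=
      (Homeomorph.neg ℝ).measurableEmbedding
    have : IntegrableOn (fun x : ℝ => |x| ^ p) (Set.Icc (-s) 0)
        (Measure.map (fun x : ℝ => -x) volume) := by
      rw [hneg.integrableOn_map_iff]
      have hpre : (fun x : ℝ => -x) ⁻¹' Set.Icc (-s) 0 = Set.Icc 0 s := by
        ext x; simp [Set.mem_Icc]
      rw [hpre]
      exact h1.congr_fun (fun x _ => by simp [Function.comp, abs_neg]) measurableSet_Icc
    rwa [Measure.map_neg_eq_self] at this
  have := h2.union h1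
  rwa [Set.Icc_union_Icc_eq_Icc (by linarith) hs.le] at this

theorem kernel_integral {s p : ℝ} (hs : 0 < s) (hp1 : -1 < p) :
    (∫ x : ℝ, if |x| ≤ s then |x| ^ p else 0) = 2 * (s ^ (p + 1) / (p + 1)) := by
  have h1 : (∫ x : ℝ, if |x| ≤ s then |x| ^ p else 0)
      = 2 * ∫ x in Set.Ioi (0:ℝ), if x ≤ s then x ^ p else 0 :=
    integral_comp_abs (f := fun y => if y ≤ s then y ^ p else 0)
  rw [h1]
  have h2 : (∫ x in Set.Ioi (0:ℝ), if x ≤ s then x ^ p else 0)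
      = ∫ x in Set.Ioc (0:ℝ) s, x ^ p := by
    rw [show (fun x : ℝ => if x ≤ s then x ^ p else 0)
        = Set.indicator (Set.Iic s) (fun y : ℝ => y ^ p) from by
      funext x; by_cases h : x ≤ s <;> simp [Set.indicator_apply, Set.mem_Iic, h]]
    rw [setIntegral_indicator measurableSet_Iic, Set.Ioi_inter_Iic]
  rw [h2, ← intervalIntegral.integral_of_le hs.le,
    integral_rpow (Or.inl hp1), Real.zero_rpow (by linarith), sub_zero]

set_option maxHeartbeats 1000000 in
/-- Seminorm bound for the fractional covariance `γ(x) = σ²H(2H−1)|x|^{2H−2}`,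
`H ∈ (1/2, 1)`: there is a constant `c > 0` (depending only on `H` and `σ`) such that
for every compactly supported càdlàg `f : ℝ → ℝ` and every `t > 0`,
`∫∫ |f(a)| γ(a−b) |f(b)| da db ≤ c t^H (t^{−1/2} ‖f‖₂² + t^{−1} ‖f‖₁²)`. -/
theorem fractional_noise_seminorm_bound (H σ : ℝ) (hH : H ∈ Set.Ioo (1/2 : ℝ) 1)
    (hσ : 0 < σ) :
    ∃ c : ℝ, 0 < c ∧ ∀ f : ℝ → ℝ, Cadlag f → HasCompactSupport f → ∀ t : ℝ, 0 < t →
      (∫ a : ℝ, ∫ b : ℝ, |f a| * (σ ^ 2 * H * (2 * H - 1) * |a - b| ^ (2 * H - 2)) * |f b|)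
        ≤ c * t ^ H *
          (t ^ (-(1/2) : ℝ) * (∫ x : ℝ, |f x| ^ 2) + t ^ (-1 : ℝ) * (∫ x : ℝ, |f x|) ^ 2) := by
  obtain ⟨hH1, hH2⟩ := hH
  have hH3 : (0:ℝ) < 2 * H - 1 := by linarith
  have hK : 0 < σ ^ 2 * H * (2 * H - 1) :=
    mul_pos (mul_pos (pow_pos hσ 2) (by linarith)) hH3
  set K := σ ^ 2 * H * (2 * H - 1) with hK_def
  refine ⟨K * (2 / (2 * H - 1) + 1), mul_pos hK (by positivity), ?_⟩
  intro f hf hfc t ht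
  set c := K * (2 / (2 * H - 1) + 1) with hc_def
  have hp1 : (-1 : ℝ) < 2 * H - 2 := by linarith
  have hp0 : (2 * H - 2 : ℝ) < 0 := by linarith
  set s := t ^ ((1:ℝ)/2) with hs_def
  have hs : 0 < s := Real.rpow_pos_of_pos ht _
  set k : ℝ → ℝ := fun x => if |x| ≤ s then |x| ^ (2 * H - 2) else 0 with hk_def
  have hk_int : Integrable k := kernel_integrable hs hp1
  have hk_nonneg : ∀ x, 0 ≤ k x := by
    intro x; rw [hk_def]; dsimp only; split
    · positivity
    · exact le_refl 0
  have hk_meas : Measurable k := by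
    rw [hk_def]
    have h1 : Measurable fun x : ℝ => |x| ^ (2 * H - 2) := by fun_prop
    exact Measurable.ite (measurableSet_le measurable_abs measurable_const) h1 measurable_const
  have hfm : Measurable f := meas_of_rc hf.1
  obtain ⟨M, hM0, hM⟩ := bdd_of_cadlag hf hfc
  have hts : MeasurableSet (tsupport f) := (isClosed_tsupport f).measurableSet
  have htfin : volume (tsupport f) < ⊤ := hfc.measure_lt_top
  have hind : Integrable ((tsupport f).indicator fun _ => (1:ℝ)) := by
    rw [integrable_indicator_iff hts]
    exact integrableOn_const htfin.ne
  have hf1 : Integrable (fun x => |f x|) := by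
    refine (hind.const_mul M).mono' hfm.abs.aestronglyMeasurable
      (Eventually.of_forall fun x => ?_)
    rw [Real.norm_eq_abs, abs_abs]
    by_cases hx : x ∈ tsupport f
    · simpa [Set.indicator_of_mem hx] using hM x
    · simp [image_eq_zero_of_notMem_tsupport hx, Set.indicator_of_notMem hx]
  have hf2 : Integrable (fun x => |f x| ^ 2) := by
    refine (hind.const_mul (M ^ 2)).mono' (hfm.abs.pow_const 2).aestronglyMeasurable
      (Eventually.of_forall fun x => ?_)
    rw [Real.norm_eq_abs, abs_of_nonneg (by positivity)]
    by_cases hx : x ∈ tsupport f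
    · have := hM x
      simp only [Set.indicator_of_mem hx, mul_one]
      nlinarith [abs_nonneg (f x)]
    · simp [image_eq_zero_of_notMem_tsupport hx, Set.indicator_of_notMem hx]
  have hI2nn : 0 ≤ ∫ x, |f x| ^ 2 := integral_nonneg fun x => by positivity
  have hL1nn : 0 ≤ ∫ x, |f x| := integral_nonneg fun x => abs_nonneg _
  -- product integrability for Fubini
  have hQm : Measurable (fun q : ℝ × ℝ => k (q.1 - q.2) * |f q.2| ^ 2) :=
    (hk_meas.comp (measurable_fst.sub measurable_snd)).mul
      (((hfm.comp measurable_snd).abs).pow_const 2)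
  have hQint : Integrable (fun q : ℝ × ℝ => k (q.1 - q.2) * |f q.2| ^ 2)
      (volume.prod volume) := by
    rw [integrable_prod_iff' hQm.aestronglyMeasurable]
    refine ⟨Eventually.of_forall fun b => ?_, ?_⟩
    · dsimp only
      exact (hk_int.comp_sub_right b).mul_const _
    · dsimp only
      have heq : ∀ b : ℝ, (∫ a, ‖k (a - b) * |f b| ^ 2‖) = (∫ x, k x) * |f b| ^ 2 := by
        intro b
        have h1 : ∀ a : ℝ, ‖k (a - b) * |f b| ^ 2‖ = k (a - b) * |f b| ^ 2 := fun a => by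
          rw [Real.norm_eq_abs, abs_of_nonneg (mul_nonneg (hk_nonneg _) (by positivity))]
        simp_rw [h1]
        rw [integral_mul_const, integral_sub_right_eq_self (fun x => k x) b]
      exact (hf2.const_mul _).congr (Eventually.of_forall fun b => (heq b).symm)
  have hkil : Integrable (fun a => ∫ b, k (a - b) * |f b| ^ 2) := hQint.integral_prod_left
  have hswap : (∫ a, ∫ b, k (a - b) * |f b| ^ 2) = (∫ x, k x) * ∫ x, |f x| ^ 2 := by
    rw [integral_integral_swap hQint]
    have h1 : ∀ b : ℝ, (∫ a, k (a - b) * |f b| ^ 2) = (∫ x, k x) * |f b| ^ 2 := fun b => by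
      rw [integral_mul_const, integral_sub_right_eq_self (fun x => k x) b]
    simp_rw [h1]
    rw [integral_const_mul]
  have hdom : ∀ a : ℝ, Integrable (fun b => k (a - b) * |f b| ^ 2) := by
    intro a
    refine ((hk_int.comp_sub_left a).const_mul (M ^ 2)).mono'
      ((hk_meas.comp (measurable_const.sub measurable_id)).mul
        ((hfm.abs).pow_const 2)).aestronglyMeasurable
      (Eventually.of_forall fun b => ?_)
    rw [Real.norm_eq_abs, abs_of_nonneg (mul_nonneg (hk_nonneg _) (by positivity))]
    calc k (a - b) * |f b| ^ 2 ≤ k (a - b) * M ^ 2 := by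
          apply mul_le_mul_of_nonneg_left ?_ (hk_nonneg _)
          nlinarith [hM b, abs_nonneg (f b)]
      _ = M ^ 2 * k (a - b) := mul_comm _ _
  have hbint : ∀ a : ℝ, Integrable (fun b =>
      K * (k (a - b) * |f a| ^ 2 / 2 + k (a - b) * |f b| ^ 2 / 2
        + t ^ (H - 1) * |f a| * |f b|)) := by
    intro a
    apply Integrable.const_mul
    exact ((((hk_int.comp_sub_left a).mul_const _).div_const _).add
      ((hdom a).div_const _)).add (hf1.const_mul _)
  -- pointwise bound
  have hAM : ∀ a b : ℝ, |f a| * |f b| ≤ (|f a| ^ 2 + |f b| ^ 2) / 2 := fun a b => by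
    nlinarith [sq_nonneg (|f a| - |f b|)]
  have hsp : s ^ (2 * H - 2) = t ^ (H - 1) := by
    rw [hs_def, ← Real.rpow_mul ht.le, show (1:ℝ)/2 * (2 * H - 2) = H - 1 from by ring]
  have htH : (0:ℝ) ≤ t ^ (H - 1) := (Real.rpow_pos_of_pos ht _).le
  have hpoint : ∀ a b : ℝ, |f a| * (K * |a - b| ^ (2 * H - 2)) * |f b|
      ≤ K * (k (a - b) * |f a| ^ 2 / 2 + k (a - b) * |f b| ^ 2 / 2
        + t ^ (H - 1) * |f a| * |f b|) := by
    intro a b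
    have habs : (0:ℝ) ≤ |a - b| ^ (2 * H - 2) := Real.rpow_nonneg (abs_nonneg _) _
    by_cases hle : |a - b| ≤ s
    · have hkeq : k (a - b) = |a - b| ^ (2 * H - 2) := by rw [hk_def]; exact if_pos hle
      rw [hkeq]
      rw [show |f a| * (K * |a - b| ^ (2 * H - 2)) * |f b|
          = K * (|a - b| ^ (2 * H - 2) * (|f a| * |f b|)) from by ring]
      apply mul_le_mul_of_nonneg_left _ hK.le
      calc |a - b| ^ (2 * H - 2) * (|f a| * |f b|)
          ≤ |a - b| ^ (2 * H - 2) * ((|f a| ^ 2 + |f b| ^ 2) / 2) :=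
            mul_le_mul_of_nonneg_left (hAM a b) habs
        _ = |a - b| ^ (2 * H - 2) * |f a| ^ 2 / 2 + |a - b| ^ (2 * H - 2) * |f b| ^ 2 / 2 := by
            ring
        _ ≤ |a - b| ^ (2 * H - 2) * |f a| ^ 2 / 2 + |a - b| ^ (2 * H - 2) * |f b| ^ 2 / 2
            + t ^ (H - 1) * |f a| * |f b| := by
            have : (0:ℝ) ≤ t ^ (H - 1) * |f a| * |f b| :=
              mul_nonneg (mul_nonneg htH (abs_nonneg _)) (abs_nonneg _)
            linarith
    · have hkeq : k (a - b) = 0 := by rw [hk_def]; exact if_neg hle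
      rw [hkeq]
      have h2 : |a - b| ^ (2 * H - 2) ≤ t ^ (H - 1) := by
        rw [← hsp]
        exact Real.rpow_le_rpow_of_nonpos hs (not_le.1 hle).le hp0.le
      calc |f a| * (K * |a - b| ^ (2 * H - 2)) * |f b|
          = K * (|a - b| ^ (2 * H - 2) * (|f a| * |f b|)) := by ring
        _ ≤ K * (t ^ (H - 1) * (|f a| * |f b|)) :=
            mul_le_mul_of_nonneg_left
              (mul_le_mul_of_nonneg_right h2
                (mul_nonneg (abs_nonneg _) (abs_nonneg _))) hK.le
        _ = K * (0 * |f a| ^ 2 / 2 + 0 * |f b| ^ 2 / 2 + t ^ (H - 1) * |f a| * |f b|) := by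
            ring
  have hgnn : ∀ a b : ℝ, 0 ≤ |f a| * (K * |a - b| ^ (2 * H - 2)) * |f b| := fun a b =>
    mul_nonneg (mul_nonneg (abs_nonneg _)
      (mul_nonneg hK.le (Real.rpow_nonneg (abs_nonneg _) _))) (abs_nonneg _)
  have hstep1 : ∀ a : ℝ, (∫ b, |f a| * (K * |a - b| ^ (2 * H - 2)) * |f b|)
      ≤ ∫ b, K * (k (a - b) * |f a| ^ 2 / 2 + k (a - b) * |f b| ^ 2 / 2
        + t ^ (H - 1) * |f a| * |f b|) := fun a =>
    integral_mono_of_nonneg (Eventually.of_forall fun b => hgnn a b) (hbint a)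
      (Eventually.of_forall fun b => hpoint a b)
  have hinner : ∀ a : ℝ, (∫ b, K * (k (a - b) * |f a| ^ 2 / 2 + k (a - b) * |f b| ^ 2 / 2
        + t ^ (H - 1) * |f a| * |f b|))
      = K * ((∫ x, k x) * |f a| ^ 2 / 2 + (∫ b, k (a - b) * |f b| ^ 2) / 2
        + t ^ (H - 1) * |f a| * (∫ x, |f x|)) := by
    intro a
    have i1 : Integrable (fun b => k (a - b) * |f a| ^ 2 / 2) volume :=
      ((hk_int.comp_sub_left a).mul_const _).div_const _
    have i2 : Integrable (fun b => k (a - b) * |f b| ^ 2 / 2) volume :=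
      (hdom a).div_const _
    have i12 : Integrable (fun b => k (a - b) * |f a| ^ 2 / 2
        + k (a - b) * |f b| ^ 2 / 2) volume := i1.add i2
    have i3 : Integrable (fun b => t ^ (H - 1) * |f a| * |f b|) volume :=
      hf1.const_mul _
    rw [integral_const_mul]
    congr 1
    rw [integral_add i12 i3, integral_add i1 i2]
    congr 1
    · congr 1
      · rw [integral_div, integral_mul_const, integral_sub_left_eq_self (fun x => k x) volume a]
      · rw [integral_div]
    · rw [integral_const_mul]
  have hOuter : Integrable (fun a => ∫ b, K * (k (a - b) * |f a| ^ 2 / 2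
      + k (a - b) * |f b| ^ 2 / 2 + t ^ (H - 1) * |f a| * |f b|)) := by
    rw [funext hinner]
    apply Integrable.const_mul
    exact ((((hf2.const_mul _).div_const _).add (hkil.div_const _)).add
      ((hf1.const_mul _).mul_const _))
  have hstep2 : (∫ a, ∫ b, |f a| * (K * |a - b| ^ (2 * H - 2)) * |f b|)
      ≤ ∫ a, ∫ b, K * (k (a - b) * |f a| ^ 2 / 2 + k (a - b) * |f b| ^ 2 / 2
        + t ^ (H - 1) * |f a| * |f b|) :=
    integral_mono_of_nonneg
      (Eventually.of_forall fun a => integral_nonneg fun b => hgnn a b) hOuter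
      (Eventually.of_forall hstep1)
  have houter_eval : (∫ a, ∫ b, K * (k (a - b) * |f a| ^ 2 / 2 + k (a - b) * |f b| ^ 2 / 2
        + t ^ (H - 1) * |f a| * |f b|))
      = K * ((∫ x, k x) * (∫ x, |f x| ^ 2) + t ^ (H - 1) * (∫ x, |f x|) ^ 2) := by
    have j1 : Integrable (fun a => (∫ x, k x) * |f a| ^ 2 / 2) volume :=
      (hf2.const_mul _).div_const _
    have j2 : Integrable (fun a => (∫ b, k (a - b) * |f b| ^ 2) / 2) volume :=
      hkil.div_const _
    have j12 : Integrable (fun a => (∫ x, k x) * |f a| ^ 2 / 2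
        + (∫ b, k (a - b) * |f b| ^ 2) / 2) volume := j1.add j2
    have j3 : Integrable (fun a => t ^ (H - 1) * |f a| * (∫ x, |f x|)) volume :=
      (hf1.const_mul _).mul_const _
    rw [funext hinner, integral_const_mul]
    congr 1
    rw [integral_add j12 j3, integral_add j1 j2,
      integral_div, integral_div, integral_const_mul, hswap, integral_mul_const,
      integral_const_mul]
    ring
  -- value of the kernel integral
  have hIk0 := kernel_integral (s := s) (p := 2 * H - 2) hs hp1
  rw [← hk_def] at hIk0
  have hsexp : s ^ (2 * H - 2 + 1) = t ^ (H - 1/2) := by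
    rw [hs_def, ← Real.rpow_mul ht.le,
      show (1:ℝ)/2 * (2 * H - 2 + 1) = H - 1/2 from by ring]
  rw [hsexp] at hIk0
  have htA : (0:ℝ) ≤ t ^ (H - 1/2) := (Real.rpow_pos_of_pos ht _).le
  -- final assembly
  have e1 : t ^ H * t ^ (-(1/2) : ℝ) = t ^ (H - 1/2) := by
    rw [← Real.rpow_add ht]; congr 1
  have e2 : t ^ H * t ^ (-1 : ℝ) = t ^ (H - 1) := by
    rw [← Real.rpow_add ht]; congr 1
  have hrhs : c * t ^ H * (t ^ (-(1/2) : ℝ) * (∫ x, |f x| ^ 2)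
        + t ^ (-1 : ℝ) * (∫ x, |f x|) ^ 2)
      = c * (t ^ (H - 1/2) * (∫ x, |f x| ^ 2) + t ^ (H - 1) * (∫ x, |f x|) ^ 2) := by
    rw [← e1, ← e2]; ring
  calc (∫ a, ∫ b, |f a| * (K * |a - b| ^ (2 * H - 2)) * |f b|)
      ≤ ∫ a, ∫ b, K * (k (a - b) * |f a| ^ 2 / 2 + k (a - b) * |f b| ^ 2 / 2
          + t ^ (H - 1) * |f a| * |f b|) := hstep2
    _ = K * ((∫ x, k x) * (∫ x, |f x| ^ 2) + t ^ (H - 1) * (∫ x, |f x|) ^ 2) := houter_eval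
    _ = K * (2 * (t ^ (H - 1/2) / (2 * H - 1)) * (∫ x, |f x| ^ 2)
          + t ^ (H - 1) * (∫ x, |f x|) ^ 2) := by rw [hIk0, show (2 * H - 2 + 1 : ℝ) = 2 * H - 1 from by ring]
    _ ≤ c * t ^ H * (t ^ (-(1/2) : ℝ) * (∫ x, |f x| ^ 2)
          + t ^ (-1 : ℝ) * (∫ x, |f x|) ^ 2) := by
        rw [hrhs, hc_def]
        have hd : (0:ℝ) < 2 / (2 * H - 1) := by positivity
        have hX : (0:ℝ) ≤ t ^ (H - 1/2) * (∫ x, |f x| ^ 2) := mul_nonneg htA hI2nn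
        have hY : (0:ℝ) ≤ t ^ (H - 1) * (∫ x, |f x|) ^ 2 :=
          mul_nonneg htH (sq_nonneg _)
        have key : ∀ κ d X Y : ℝ, 0 < κ → 0 < d → 0 ≤ X → 0 ≤ Y →
            κ * (d * X + Y) ≤ κ * (d + 1) * (X + Y) := by
          intro κ d X Y hκ hdp hXp hYp
          nlinarith [mul_nonneg hκ.le hXp, mul_nonneg (mul_nonneg hκ.le hdp.le) hYp]
        have hre : 2 * (t ^ (H - 1/2) / (2 * H - 1)) * (∫ x, |f x| ^ 2)
            = (2 / (2 * H - 1)) * (t ^ (H - 1/2) * (∫ x, |f x| ^ 2)) := by ring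
        rw [hre]
        exact key K (2 / (2 * H - 1)) (t ^ (H - 1/2) * ∫ x, |f x| ^ 2)
          (t ^ (H - 1) * (∫ x, |f x|) ^ 2) hK hd hX hY
end

section
/- Fix b > 0 and q > 1. Let B^x be a Brownian motion started at x with continuous local time L^a_t, maximum M^x(t) = sup_{s∈[0,t]} B^x(s), and minimum m^x(t) = inf_{s∈[0,t]} B^x(s). Let Y^x be the reflection of B^x into (0,b), so that L^z_t(Y^x) = Σ_{a ∈ 2bℤ ± z} L^a_t(B^x) for z ∈ (0,b). Then there exist constants c₁, c₂ > 0 depending only on b and q such that (∫_0^b L^z_t(Y^x)^q dz)^{1/q} ≤ c₁ t^{1/q} ( c₂^{1−1/q} (sup_{a∈ℝ} L^a_t(B^x))^{1−1/q} + ( sup_{a∈ℝ} L^a_t(B^x) · (M^x(t) − m^x(t)) )^{1−1/q} ). -/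
/-!
Only the cells `(2bk − b, 2bk + b]` that meet `[m, M]` contribute to the reflected local
time, and there are at most `(M − m)/(2b) + 2` of them, so the reflected local time is bounded
by `K = 2S((M − m)/(2b) + 2)`. Since these cells tile `ℝ`, its integral over `(0, b)` is at
most `∫ f = t`. Hence `∫ L^q ≤ K^(q−1) ∫ L ≤ K^(q−1) t`, and the subadditivity of
`x ↦ x^(1−1/q)` splits `K^(1−1/q) = (1/b)^(1−1/q) (4bS + S(M − m))^(1−1/q)` into the two
terms of the bound.
-/

open MeasureTheory Finset

noncomputable section

/-- The levels `2bk ± z` of a path all fold onto the level `z` of its reflection into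
`(0, b)`. -/
def reflectedLocalTime (f : ℝ → ℝ) (b z : ℝ) : ℝ :=
  ∑' k : ℤ, (f (2 * b * k + z) + f (2 * b * k - z))

/-- The `k` for which the cell `[2bk − b, 2bk + b]` can meet `[m, M]`. -/
def latticeWindow (b m M : ℝ) : Finset ℤ :=
  Icc ⌈(m - b) / (2 * b)⌉ ⌊(M + b) / (2 * b)⌋

end

lemma card_Icc_ceil_floor_le {x y : ℝ} (hxy : x ≤ y + 1) :
    (#(Icc ⌈x⌉ ⌊y⌋) : ℝ) ≤ y - x + 1 := by
  by_cases h : ⌈x⌉ ≤ ⌊y⌋ + 1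
  · have hcard : ((#(Icc ⌈x⌉ ⌊y⌋) : ℤ) : ℝ) = ⌊y⌋ + 1 - ⌈x⌉ := by
      rw [Int.card_Icc_of_le _ _ h]; push_cast; ring
    have := Int.floor_le y
    have := Int.le_ceil x
    push_cast at hcard
    linarith
  · rw [Icc_eq_empty (by omega), card_empty, Nat.cast_zero]
    linarith

section ReflectedLocalTime

variable {f : ℝ → ℝ} {b m M S z : ℝ}

lemma abs_le_of_mem_Ioo_zero (hz : z ∈ Set.Ioo 0 b) : |z| ≤ b :=
  abs_le.2 ⟨by linarith [hz.1, hz.2], hz.2.le⟩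

lemma reflectedLocalTime_nonneg (hf0 : 0 ≤ f) : 0 ≤ reflectedLocalTime f b z :=
  tsum_nonneg fun _ => add_nonneg (hf0 _) (hf0 _)

lemma card_latticeWindow_le (hb : 0 < b) (hmM : m ≤ M) :
    (#(latticeWindow b m M) : ℝ) ≤ (M - m) / (2 * b) + 2 := by
  have hwidth : (M + b) / (2 * b) - (m - b) / (2 * b) = (M - m) / (2 * b) + 1 := by
    field_simp; ring
  have : 0 ≤ (M - m) / (2 * b) := div_nonneg (by linarith) (by positivity)
  have := card_Icc_ceil_floor_le (x := (m - b) / (2 * b)) (y := (M + b) / (2 * b)) (by linarith)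
  rw [latticeWindow]
  linarith

lemma reflected_pair_eq_zero_of_notMem_latticeWindow {k : ℤ} (hb : 0 < b)
    (hf : ∀ a, a < m ∨ M < a → f a = 0) (hz : |z| ≤ b) (hk : k ∉ latticeWindow b m M) :
    f (2 * b * k + z) + f (2 * b * k - z) = 0 := by
  obtain ⟨hzl, hzu⟩ := abs_le.1 hz
  rw [latticeWindow, mem_Icc, not_and_or, not_le, not_le] at hk
  rcases hk with hk | hk
  · have := (lt_div_iff₀ (by positivity)).1 (Int.lt_ceil.1 hk)
    rw [hf _ (.inl (by linarith)), hf _ (.inl (by linarith)), add_zero]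
  · have := (div_lt_iff₀ (by positivity)).1 (Int.floor_lt.1 hk)
    rw [hf _ (.inr (by linarith)), hf _ (.inr (by linarith)), add_zero]

lemma reflectedLocalTime_eq_sum (hb : 0 < b) (hf : ∀ a, a < m ∨ M < a → f a = 0)
    (hz : |z| ≤ b) :
    reflectedLocalTime f b z =
      ∑ k ∈ latticeWindow b m M, (f (2 * b * k + z) + f (2 * b * k - z)) :=
  tsum_eq_sum fun _ hk => reflected_pair_eq_zero_of_notMem_latticeWindow hb hf hz hk

lemma reflectedLocalTime_le (hb : 0 < b) (hmM : m ≤ M) (hf : ∀ a, a < m ∨ M < a → f a = 0)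
    (hfS : ∀ a, f a ≤ S) (hS : 0 ≤ S) (hz : |z| ≤ b) :
    reflectedLocalTime f b z ≤ 2 * S * ((M - m) / (2 * b) + 2) := by
  rw [reflectedLocalTime_eq_sum hb hf hz]
  calc ∑ k ∈ latticeWindow b m M, (f (2 * b * k + z) + f (2 * b * k - z))
      ≤ ∑ _k ∈ latticeWindow b m M, 2 * S :=
        sum_le_sum fun k _ => by linarith [hfS (2 * b * k + z), hfS (2 * b * k - z)]
    _ = 2 * S * #(latticeWindow b m M) := by rw [sum_const, nsmul_eq_mul, mul_comm]
    _ ≤ 2 * S * ((M - m) / (2 * b) + 2) := by gcongr; exact card_latticeWindow_le hb hmM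

lemma integrable_reflected_pair (hf : Integrable f) (c : ℝ) :
    Integrable fun z => f (c + z) + f (c - z) :=
  (hf.comp_add_left c).add (hf.comp_sub_left c)

lemma setIntegral_Ioo_reflected_pair (hf : Integrable f) (hb : 0 ≤ b) (c : ℝ) :
    ∫ z in Set.Ioo 0 b, (f (c + z) + f (c - z)) = ∫ z in Set.Ioc (c - b) (c + b), f z := by
  rw [← integral_Ioc_eq_integral_Ioo, ← intervalIntegral.integral_of_le hb,
    intervalIntegral.integral_add (hf.comp_add_left c).intervalIntegrable
      (hf.comp_sub_left c).intervalIntegrable,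
    intervalIntegral.integral_comp_add_left, intervalIntegral.integral_comp_sub_left,
    add_zero, sub_zero, add_comm,
    intervalIntegral.integral_add_adjacent_intervals hf.intervalIntegrable hf.intervalIntegrable,
    intervalIntegral.integral_of_le (by linarith)]

lemma sum_setIntegral_Ioc_lattice_le (hf0 : 0 ≤ f) (hf : Integrable f) (b : ℝ)
    (s : Finset ℤ) :
    ∑ k ∈ s, ∫ z in Set.Ioc (2 * b * k - b) (2 * b * k + b), f z ≤ ∫ z, f z := by
  have hcell : ∀ k : ℤ, Set.Ioc (2 * b * k - b) (2 * b * k + b) =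
      Set.Ioc (-b + k • (2 * b)) (-b + (k + 1) • (2 * b)) := by
    intro k
    simp only [zsmul_eq_mul, Int.cast_add, Int.cast_one]
    ring_nf
  have hdisj : Pairwise (Function.onFun Disjoint
      fun k : ℤ => Set.Ioc (2 * b * k - b) (2 * b * k + b)) := by
    simpa only [hcell] using Set.pairwise_disjoint_Ioc_add_zsmul (-b) (2 * b)
  rw [← integral_biUnion_finset s (fun _ _ => measurableSet_Ioc) (hdisj.set_pairwise _)
    fun _ _ => hf.integrableOn]
  exact setIntegral_le_integral hf (.of_forall hf0)

lemma integrableOn_reflectedLocalTime (hb : 0 < b) (hf : Integrable f)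
    (hvan : ∀ a, a < m ∨ M < a → f a = 0) :
    IntegrableOn (reflectedLocalTime f b) (Set.Ioo 0 b) :=
  (integrable_finsetSum (latticeWindow b m M) fun k _ =>
      integrable_reflected_pair hf (2 * b * k)).integrableOn.congr_fun
    (fun _ hz => (reflectedLocalTime_eq_sum hb hvan (abs_le_of_mem_Ioo_zero hz)).symm)
    measurableSet_Ioo

lemma setIntegral_reflectedLocalTime_le (hb : 0 < b) (hf0 : 0 ≤ f) (hf : Integrable f)
    (hvan : ∀ a, a < m ∨ M < a → f a = 0) :
    ∫ z in Set.Ioo 0 b, reflectedLocalTime f b z ≤ ∫ a, f a :=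
  calc ∫ z in Set.Ioo 0 b, reflectedLocalTime f b z
      = ∫ z in Set.Ioo 0 b,
          ∑ k ∈ latticeWindow b m M, (f (2 * b * k + z) + f (2 * b * k - z)) :=
        setIntegral_congr_fun measurableSet_Ioo fun _ hz =>
          reflectedLocalTime_eq_sum hb hvan (abs_le_of_mem_Ioo_zero hz)
    _ = ∑ k ∈ latticeWindow b m M,
          ∫ z in Set.Ioo 0 b, (f (2 * b * k + z) + f (2 * b * k - z)) :=
        integral_finsetSum _ fun _ _ => (integrable_reflected_pair hf _).integrableOn
    _ = ∑ k ∈ latticeWindow b m M, ∫ z in Set.Ioc (2 * b * k - b) (2 * b * k + b), f z :=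
        sum_congr rfl fun _ _ => setIntegral_Ioo_reflected_pair hf hb.le _
    _ ≤ ∫ a, f a := sum_setIntegral_Ioc_lattice_le hf0 hf b _

end ReflectedLocalTime

lemma rpow_le_rpow_sub_one_mul {x K q : ℝ} (hx : 0 ≤ x) (hxK : x ≤ K) (hq : 1 ≤ q) :
    x ^ q ≤ K ^ (q - 1) * x := by
  rcases hx.eq_or_lt with rfl | hx
  · simp [Real.zero_rpow (by linarith : q ≠ 0)]
  calc x ^ q = x ^ (q - 1) * x := by rw [Real.rpow_sub_one hx.ne', div_mul_cancel₀ _ hx.ne']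
    _ ≤ K ^ (q - 1) * x :=
        mul_le_mul_of_nonneg_right (Real.rpow_le_rpow hx.le hxK (by linarith)) hx.le

lemma setIntegral_rpow_le_of_le {α : Type*} [MeasurableSpace α] {μ : Measure α} {s : Set α}
    {g : α → ℝ} {K q : ℝ} (hs : MeasurableSet s) (hg : IntegrableOn g s μ)
    (hg0 : ∀ x ∈ s, 0 ≤ g x) (hgK : ∀ x ∈ s, g x ≤ K) (hq : 1 ≤ q) :
    ∫ x in s, g x ^ q ∂μ ≤ K ^ (q - 1) * ∫ x in s, g x ∂μ := by
  rw [← integral_const_mul]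
  exact integral_mono_of_nonneg
    (ae_restrict_of_forall_mem hs fun x hx => Real.rpow_nonneg (hg0 x hx) q) (hg.const_mul _)
    (ae_restrict_of_forall_mem hs fun x hx => rpow_le_rpow_sub_one_mul (hg0 x hx) (hgK x hx) hq)

lemma mul_add_rpow_le {c x y p : ℝ} (hc : 0 ≤ c) (hx : 0 ≤ x) (hy : 0 ≤ y) (hp : 0 ≤ p)
    (hp1 : p ≤ 1) : (c * (x + y)) ^ p ≤ c ^ p * (x ^ p + y ^ p) := by
  rw [Real.mul_rpow hc (add_nonneg hx hy)]
  exact mul_le_mul_of_nonneg_left (Real.rpow_add_le_add_rpow hx hy hp hp1) (by positivity)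

lemma rpow_sub_one_mul_rpow_one_div {K t q : ℝ} (hK : 0 ≤ K) (ht : 0 ≤ t) (hq : q ≠ 0) :
    (K ^ (q - 1) * t) ^ (1 / q) = K ^ (1 - 1 / q) * t ^ (1 / q) := by
  rw [Real.mul_rpow (by positivity) ht, ← Real.rpow_mul hK]
  congr 2
  field_simp

/-- Local-time norm bound for reflected Brownian motion on `(0,b)`.
Here `f a = L^a_t(B^x)` is the continuous local-time profile of a Brownian motion run for
time `t`: it is nonnegative, continuous, integrates to `t`, vanishes outside the range
`[m, M]` of the path, and is bounded by `S = sup_a L^a_t(B^x)`.  The local time of the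
reflection `Y^x` into `(0,b)` at level `z ∈ (0,b)` is `∑_{k∈ℤ} f(2bk+z) + f(2bk−z)`.
Then there are constants `c₁, c₂ > 0` depending only on `b` and `q` such that
`(∫_0^b L^z_t(Y^x)^q dz)^{1/q} ≤ c₁ t^{1/q} (c₂^{1−1/q} S^{1−1/q} + (S(M−m))^{1−1/q})`. -/
theorem interval_reflected_local_time_bound (b q : ℝ) (hb : 0 < b) (hq : 1 < q) :
    ∃ c₁ : ℝ, 0 < c₁ ∧ ∃ c₂ : ℝ, 0 < c₂ ∧
      ∀ (t : ℝ) (f : ℝ → ℝ) (m M S : ℝ), 0 < t →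
        Continuous f → (∀ a : ℝ, 0 ≤ f a) → (∫ a : ℝ, f a) = t →
        m ≤ M → (∀ a : ℝ, a < m ∨ M < a → f a = 0) → (∀ a : ℝ, f a ≤ S) →
        (∫ z in Set.Ioo (0 : ℝ) b,
            (∑' k : ℤ, (f (2 * b * k + z) + f (2 * b * k - z))) ^ q) ^ (1 / q)
          ≤ c₁ * t ^ (1 / q) *
            (c₂ ^ (1 - 1 / q) * S ^ (1 - 1 / q) + (S * (M - m)) ^ (1 - 1 / q)) := by
  refine ⟨(1 / b) ^ (1 - 1 / q), by positivity, 4 * b, by positivity, ?_⟩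
  intro t f m M S ht _ hf0 hft hmM hvan hfS
  have hfi : Integrable f := .of_integral_ne_zero (hft ▸ ht.ne')
  have hS : 0 ≤ S := (hf0 0).trans (hfS 0)
  have hq0 : 0 < q := by linarith
  have hp : 0 ≤ 1 - 1 / q := by rw [sub_nonneg, div_le_one hq0]; linarith
  set L := reflectedLocalTime f b
  set K := 2 * S * ((M - m) / (2 * b) + 2)
  have hK : K = 1 / b * (4 * b * S + S * (M - m)) := by simp only [K]; field_simp; ring
  have hLq : ∫ z in Set.Ioo 0 b, L z ^ q ≤ K ^ (q - 1) * ∫ z in Set.Ioo 0 b, L z :=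
    setIntegral_rpow_le_of_le measurableSet_Ioo (integrableOn_reflectedLocalTime hb hfi hvan)
      (fun _ _ => reflectedLocalTime_nonneg hf0)
      (fun _ hz => reflectedLocalTime_le hb hmM hvan hfS hS (abs_le_of_mem_Ioo_zero hz)) hq.le
  have hL : ∫ z in Set.Ioo 0 b, L z ≤ t :=
    hft ▸ setIntegral_reflectedLocalTime_le hb hf0 hfi hvan
  have hLq_nonneg : 0 ≤ ∫ z in Set.Ioo 0 b, L z ^ q :=
    setIntegral_nonneg measurableSet_Ioo fun _ _ =>
      Real.rpow_nonneg (reflectedLocalTime_nonneg hf0) q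
  calc (∫ z in Set.Ioo 0 b, L z ^ q) ^ (1 / q)
      ≤ (K ^ (q - 1) * t) ^ (1 / q) := by gcongr; exact hLq.trans (by gcongr)
    _ = K ^ (1 - 1 / q) * t ^ (1 / q) := rpow_sub_one_mul_rpow_one_div (by positivity) ht.le hq0.ne'
    _ ≤ (1 / b) ^ (1 - 1 / q) * ((4 * b * S) ^ (1 - 1 / q) + (S * (M - m)) ^ (1 - 1 / q))
          * t ^ (1 / q) := by
        rw [hK]
        gcongr
        exact mul_add_rpow_le (by positivity) (by positivity) (by positivity) hp
          (sub_le_self _ (by positivity))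
    _ = _ := by rw [Real.mul_rpow (by positivity) hS]; ring
end
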